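/- Fix p ∈ {1,2,3} and a₁, a₂, a₃ ∈ ℝ with a₁² + a₂² + a₃² = 1, and let q = a₁i + a₂j + a₃k. Define the linear map f on m by f(Mₚ(w)) = Mₚ(q·w) on mₚ and f = 0 on the other two modules. Then f³ + f = 0, and for all positive reals λ₁, λ₂, λ₃ and all X, Y ∈ m one has g_λ(fX, Y) + g_λ(X, fY) = 0, where g_λ(X,Y) = −8(λ₁·Re tr(X₁Y₁) + λ₂·Re tr(X₂Y₂) + λ₃·Re tr(X₃Y₃)) and Xᵢ denotes the mᵢ-component. Hence (f, g_λ) is a metric f-structure. -/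

import Mathlib

open Quaternion

namespace Sp3

/-- `M₁(x) ∈ sp(3)` has entry `x` in position `(1,2)`, `−x̄` in position `(2,1)`, zeros
elsewhere (indices `0,1,2` correspond to the paper's `1,2,3`). -/
noncomputable def M1 (x : ℍ[ℝ]) : Matrix (Fin 3) (Fin 3) ℍ[ℝ] :=
  Matrix.single 0 1 x - Matrix.single 1 0 (star x)

/-- `M₂(y) ∈ sp(3)` has entry `y` in position `(1,3)`, `−ȳ` in position `(3,1)`. -/
noncomputable def M2 (y : ℍ[ℝ]) : Matrix (Fin 3) (Fin 3) ℍ[ℝ] :=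
  Matrix.single 0 2 y - Matrix.single 2 0 (star y)

/-- `M₃(z) ∈ sp(3)` has entry `z` in position `(2,3)`, `−z̄` in position `(3,2)`. -/
noncomputable def M3 (z : ℍ[ℝ]) : Matrix (Fin 3) (Fin 3) ℍ[ℝ] :=
  Matrix.single 1 2 z - Matrix.single 2 1 (star z)

/-- Membership in `h ⊂ sp(3)`: the diagonal matrices whose diagonal entries are purely
imaginary quaternions. -/
def InH (X : Matrix (Fin 3) (Fin 3) ℍ[ℝ]) : Prop :=
  (∀ i j : Fin 3, i ≠ j → X i j = 0) ∧ (∀ i : Fin 3, (X i i).re = 0)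

/-- The element of `m = m₁ ⊕ m₂ ⊕ m₃` with coordinates `(x, y, z) ∈ ℍ³`. -/
noncomputable def Mm (v : ℍ[ℝ] × ℍ[ℝ] × ℍ[ℝ]) : Matrix (Fin 3) (Fin 3) ℍ[ℝ] :=
  M1 v.1 + M2 v.2.1 + M3 v.2.2

/-- The off-diagonal part of `X`, i.e. the projection of `X ∈ sp(3)` onto `m` along `h`. -/
noncomputable def offDiag (X : Matrix (Fin 3) (Fin 3) ℍ[ℝ]) : Matrix (Fin 3) (Fin 3) ℍ[ℝ] :=
  Matrix.of fun i j => if i = j then 0 else X i j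

end Sp3

namespace Sp3

/-- The `f`-structure determined by `p ∈ {1,2,3}` and a purely imaginary unit quaternion
`q`: in coordinates it multiplies the `mₚ`-coordinate by `q` on the left and kills the
other two modules. -/
noncomputable def fP : Fin 3 → ℍ[ℝ] → (ℍ[ℝ] × ℍ[ℝ] × ℍ[ℝ] → ℍ[ℝ] × ℍ[ℝ] × ℍ[ℝ])
  | 0, q => fun v => (q * v.1, 0, 0)
  | 1, q => fun v => (0, q * v.2.1, 0)
  | 2, q => fun v => (0, 0, q * v.2.2)

/-- The invariant metric `g_λ` with characteristic numbers `(λ₁, λ₂, λ₃)`: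
`g_λ(X,Y) = −8(λ₁·Re tr(X₁Y₁) + λ₂·Re tr(X₂Y₂) + λ₃·Re tr(X₃Y₃))`, in coordinates. -/
noncomputable def gl (l1 l2 l3 : ℝ) (v w : ℍ[ℝ] × ℍ[ℝ] × ℍ[ℝ]) : ℝ :=
  -8 * (l1 * ((M1 v.1 * M1 w.1).trace).re + l2 * ((M2 v.2.1 * M2 w.2.1).trace).re +
    l3 * ((M3 v.2.2 * M3 w.2.2).trace).re)

end Sp3

/-!
Since `q` is a purely imaginary unit quaternion, `q² = -‖q‖² = -1`, so `f ∘ f = -(id on mₚ)` and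
`f³ = -f`. On each `mᵢ` one has `Re tr(Mᵢ(x) Mᵢ(y)) = -2 ⟪x, y⟫`, so `g_λ` is the orthogonal sum
of the Euclidean inner products of `ℍ` scaled by `16 λᵢ`; left multiplication by `q` is
skew-adjoint for that inner product because `q̄ = -q` and `Re(ab) = Re(ba)`.
-/

open scoped RealInnerProductSpace

namespace Quaternion

theorem re_mul_comm {R : Type*} [CommRing R] (a b : ℍ[R]) : (a * b).re = (b * a).re := by
  simp only [re_mul]
  ring

theorem mul_self_eq_neg_one {R : Type*} [CommRing R] [LinearOrder R] [IsStrictOrderedRing R]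
    {q : ℍ[R]} (hre : q.re = 0) (hnorm : normSq q = 1) : q * q = -1 := by
  rw [← sq, sq_eq_neg_normSq.2 hre, hnorm, coe_one]

theorem inner_mul_left_eq_neg {q : ℍ[ℝ]} (hre : q.re = 0) (x y : ℍ[ℝ]) :
    ⟪q * x, y⟫ = -⟪x, q * y⟫ := by
  simp only [inner_def, star_mul, star_eq_neg.2 hre, mul_neg, re_neg, neg_neg, ← mul_assoc]
  rw [mul_assoc, re_mul_comm]

end Quaternion

namespace Matrix

theorem re_trace_skewSingle_mul {n : Type*} [Fintype n] [DecidableEq n] {i j : n} (hij : i ≠ j)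
    (x y : ℍ[ℝ]) :
    ((single i j x - single j i (star x)) * (single i j y - single j i (star y))).trace.re =
      -2 * ⟪x, y⟫ := by
  simp only [sub_mul, mul_sub, single_mul_single_same, single_mul_single_of_ne _ _ _ _ hij,
    single_mul_single_of_ne _ _ _ _ hij.symm, trace_sub, trace_zero, trace_single_eq_same,
    re_sub, re_zero, inner_def]
  rw [← re_star (star x * y), star_mul, star_star, re_mul_comm (star y)]
  ring

end Matrix

namespace Sp3

theorem re_trace_M1_mul (x y : ℍ[ℝ]) : ((M1 x * M1 y).trace).re = -2 * ⟪x, y⟫ :=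
  Matrix.re_trace_skewSingle_mul (by decide) x y

theorem re_trace_M2_mul (x y : ℍ[ℝ]) : ((M2 x * M2 y).trace).re = -2 * ⟪x, y⟫ :=
  Matrix.re_trace_skewSingle_mul (by decide) x y

theorem re_trace_M3_mul (x y : ℍ[ℝ]) : ((M3 x * M3 y).trace).re = -2 * ⟪x, y⟫ :=
  Matrix.re_trace_skewSingle_mul (by decide) x y

theorem gl_eq_inner (l1 l2 l3 : ℝ) (v w : ℍ[ℝ] × ℍ[ℝ] × ℍ[ℝ]) :
    gl l1 l2 l3 v w = 16 * (l1 * ⟪v.1, w.1⟫ + l2 * ⟪v.2.1, w.2.1⟫ + l3 * ⟪v.2.2, w.2.2⟫) := by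
  rw [gl, re_trace_M1_mul, re_trace_M2_mul, re_trace_M3_mul]
  ring

theorem fP_fP (p : Fin 3) (q r : ℍ[ℝ]) (v : ℍ[ℝ] × ℍ[ℝ] × ℍ[ℝ]) :
    fP p q (fP p r v) = fP p (q * r) v := by
  fin_cases p <;> simp [fP, mul_assoc]

theorem fP_neg (p : Fin 3) (q : ℍ[ℝ]) (v : ℍ[ℝ] × ℍ[ℝ] × ℍ[ℝ]) :
    fP p (-q) v = -fP p q v := by
  fin_cases p <;> simp [fP]

theorem fP_cube_add_fP {p : Fin 3} {q : ℍ[ℝ]} (hq : q * q = -1) (v : ℍ[ℝ] × ℍ[ℝ] × ℍ[ℝ]) :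
    fP p q (fP p q (fP p q v)) + fP p q v = 0 := by
  rw [fP_fP, fP_fP, hq, neg_one_mul, fP_neg, neg_add_cancel]

theorem gl_fP_add_gl_fP {q : ℍ[ℝ]} (hre : q.re = 0) (p : Fin 3) (l1 l2 l3 : ℝ)
    (v w : ℍ[ℝ] × ℍ[ℝ] × ℍ[ℝ]) :
    gl l1 l2 l3 (fP p q v) w + gl l1 l2 l3 v (fP p q w) = 0 := by
  fin_cases p <;>
    simp only [gl_eq_inner, fP, inner_zero_left, inner_zero_right, inner_mul_left_eq_neg hre] <;>
    ring

end Sp3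

open Sp3 in
/-- fix `p ∈ {1,2,3}` and `a₁, a₂, a₃ ∈ ℝ` with `a₁² + a₂² + a₃² = 1`, and
let `q = a₁i + a₂j + a₃k`.  The map `f` with `f(Mₚ(w)) = Mₚ(q·w)` on `mₚ` and `f = 0` on
the other two modules satisfies `f³ + f = 0`, and for all positive `λ₁, λ₂, λ₃` and all
`X, Y ∈ m` one has `g_λ(fX, Y) + g_λ(X, fY) = 0`.  Hence `(f, g_λ)` is a metric
`f`-structure. -/
theorem statement15 (p : Fin 3) (a1 a2 a3 : ℝ) (ha : a1 ^ 2 + a2 ^ 2 + a3 ^ 2 = 1)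
    (q : ℍ[ℝ]) (hq : q = ⟨0, a1, a2, a3⟩) :
    (∀ v : ℍ[ℝ] × ℍ[ℝ] × ℍ[ℝ], fP p q (fP p q (fP p q v)) + fP p q v = 0) ∧
    (∀ l1 l2 l3 : ℝ, 0 < l1 → 0 < l2 → 0 < l3 →
      ∀ v w : ℍ[ℝ] × ℍ[ℝ] × ℍ[ℝ],
        gl l1 l2 l3 (fP p q v) w + gl l1 l2 l3 v (fP p q w) = 0) := by
  have hre : q.re = 0 := by rw [hq]
  have hnorm : normSq q = 1 := by
    rw [normSq_def', hq]
    linear_combination ha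
  exact ⟨fP_cube_add_fP (mul_self_eq_neg_one hre hnorm),
    fun l1 l2 l3 _ _ _ => gl_fP_add_gl_fP hre p l1 l2 l3⟩
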